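/- Let a, b, c be the tree automorphisms of the binary tree defined by the wreath recursions a = σ(c,b), b = (b,b), c = (a,a) (automaton number 771). Then b is the identity automorphism, a and c commute, and the group generated by a, b, c is free abelian of rank 2 with basis {a, c}; in particular G₇₇₁ ≅ ℤ² and aᵐcⁿ = 1 only when m = n = 0. -/

import Mathlib

/-- An invertible automaton over the two-letter alphabet `Bool`:
a set of states `Q`, a transition map and an output map such that each state
acts on the alphabet by a permutation. -/
structure BinAutomaton (Q : Type*) where
  trans : Q → Bool → Q
  out : Q → Bool → Bool
  out_bij : ∀ q, Function.Bijective (out q)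

namespace BinAutomaton

variable {Q : Type*} (A : BinAutomaton Q)

/-- The action of a state on finite binary words:
`q(xw) = ρ(q,x) · (τ(q,x))(w)`. -/
def act : Q → List Bool → List Bool
  | _, [] => []
  | q, x :: w => A.out q x :: act (A.trans q x) w

theorem act_injective (q : Q) : Function.Injective (A.act q) := by
  intro u
  induction u generalizing q with
  | nil =>
    intro v h
    cases v with
    | nil => rfl
    | cons y v => simp [act] at h
  | cons x u ih =>
    intro v h
    cases v with
    | nil => simp [act] at h
    | cons y v =>
      simp only [act, List.cons.injEq] at h
      obtain ⟨h1, h2⟩ := h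
      obtain rfl : x = y := (A.out_bij q).1 h1
      rw [ih _ h2]

theorem act_surjective (q : Q) : Function.Surjective (A.act q) := by
  intro v
  induction v generalizing q with
  | nil => exact ⟨[], rfl⟩
  | cons y v ih =>
    obtain ⟨x, hx⟩ := (A.out_bij q).2 y
    obtain ⟨w, hw⟩ := ih (A.trans q x)
    exact ⟨x :: w, by simp [act, hx, hw]⟩

/-- The tree automorphism defined by the state `q`. -/
noncomputable def perm (q : Q) : Equiv.Perm (List Bool) :=
  Equiv.ofBijective (A.act q) ⟨A.act_injective q, A.act_surjective q⟩

/-- The group generated by the automaton: the subgroup of the group of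
bijections of the binary tree generated by the states. -/
noncomputable def autGroup : Subgroup (Equiv.Perm (List Bool)) :=
  Subgroup.closure (Set.range A.perm)

end BinAutomaton

/-- Helper constructing a 3-state automaton from the sections at `0`, the
sections at `1`, and the activity of each state. -/
def mkAut3 (t0 t1 : Fin 3 → Fin 3) (actv : Fin 3 → Bool) : BinAutomaton (Fin 3) where
  trans q x := cond x (t1 q) (t0 q)
  out q x := xor (actv q) x
  out_bij q := by
    have h : ∀ b : Bool, Function.Bijective fun x => xor b x := by decide
    exact h (actv q)

/-- Automaton number 771:
`a = σ(c,b)`, `b = (b,b)`, `c = (a,a)` (states `0 = a`, `1 = b`, `2 = c`). -/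
def A771 : BinAutomaton (Fin 3) :=
  mkAut3 ![2, 1, 0] ![1, 1, 0] ![true, false, false]

noncomputable def a : Equiv.Perm (List Bool) := A771.perm 0
noncomputable def b : Equiv.Perm (List Bool) := A771.perm 1
noncomputable def c : Equiv.Perm (List Bool) := A771.perm 2

section Aux771

lemma perm_apply {Q : Type*} (A : BinAutomaton Q) (q : Q) (w : List Bool) :
    A.perm q w = A.act q w := rfl

lemma act_b : ∀ w, A771.act 1 w = w := by
  intro w
  induction w with
  | nil => rfl
  | cons x w ih =>
    show xor _ x :: A771.act _ w = _
    cases x <;> simp_all [A771, mkAut3, BinAutomaton.act]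

lemma b_eq_one : b = 1 := Equiv.ext fun w => act_b w

lemma a_false (w : List Bool) : a (false :: w) = true :: c w := rfl

lemma a_true (w : List Bool) : a (true :: w) = false :: w := by
  show false :: A771.act 1 w = _
  rw [act_b]

lemma c_cons (x : Bool) (w : List Bool) : c (x :: w) = x :: a w := by
  cases x <;> rfl

lemma a_nil : a [] = [] := rfl
lemma c_nil : c [] = [] := rfl

lemma a_inv_true (w : List Bool) : a⁻¹ (true :: w) = false :: c⁻¹ w := by
  apply a.injective
  rw [Equiv.Perm.eq_inv_iff_eq.mp rfl, a_false, Equiv.Perm.eq_inv_iff_eq.mp rfl]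

lemma a_inv_false (w : List Bool) : a⁻¹ (false :: w) = true :: w := by
  apply a.injective
  rw [Equiv.Perm.eq_inv_iff_eq.mp rfl, a_true]

lemma c_inv_cons (x : Bool) (w : List Bool) : c⁻¹ (x :: w) = x :: a⁻¹ w := by
  apply c.injective
  rw [Equiv.Perm.eq_inv_iff_eq.mp rfl, c_cons, Equiv.Perm.eq_inv_iff_eq.mp rfl]

lemma ac_comm_apply : ∀ w, a (c w) = c (a w) := by
  intro w
  induction w with
  | nil => rfl
  | cons x w ih =>
    cases x with
    | false =>
      rw [c_cons, a_false, a_false, c_cons, ih]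
    | true =>
      rw [c_cons, a_true, a_true, c_cons]

lemma comm_ac : Commute a c :=
  Equiv.ext fun w => ac_comm_apply w

lemma zpow_nil (g : Equiv.Perm (List Bool)) (hg : g [] = []) (k : ℤ) :
    (g ^ k) [] = [] := by
  have hpow : ∀ n : ℕ, (g ^ n) [] = [] := by
    intro n
    induction n with
    | zero => rfl
    | succ n ih => rw [pow_succ, Equiv.Perm.mul_apply, hg, ih]
  induction k using Int.rec with
  | ofNat n => simpa using hpow n
  | negSucc n =>
    have : (g ^ (n + 1)) ((g ^ (n + 1))⁻¹ []) = (g ^ (n + 1)) [] := by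
      rw [Equiv.Perm.eq_inv_iff_eq.mp rfl, hpow]
    simpa [zpow_negSucc] using (g ^ (n + 1)).injective this

lemma c_zpow_cons (k : ℤ) : ∀ (x : Bool) (w : List Bool),
    (c ^ k) (x :: w) = x :: (a ^ k) w := by
  induction k using Int.induction_on with
  | zero => intro x w; simp
  | succ k ih =>
    intro x w
    rw [zpow_add_one, zpow_add_one, Equiv.Perm.mul_apply, Equiv.Perm.mul_apply, c_cons, ih]
  | pred k ih =>
    intro x w
    rw [zpow_sub_one, zpow_sub_one, Equiv.Perm.mul_apply, Equiv.Perm.mul_apply, c_inv_cons, ih]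

lemma a_sq_cons (x : Bool) (w : List Bool) :
    (a ^ (2 : ℤ)) (x :: w) = x :: c w := by
  have h2 : (a ^ (2 : ℤ)) (x :: w) = a (a (x :: w)) := by
    rw [show (2 : ℤ) = 1 + 1 by norm_num, zpow_add_one, zpow_one, Equiv.Perm.mul_apply]
  rw [h2]
  cases x with
  | false => rw [a_false, a_true]
  | true => rw [a_true, a_false]

lemma a_sq_inv_cons (x : Bool) (w : List Bool) :
    (a ^ (2 : ℤ))⁻¹ (x :: w) = x :: c⁻¹ w := by
  apply (a ^ (2 : ℤ)).injective
  rw [Equiv.Perm.eq_inv_iff_eq.mp rfl, a_sq_cons, Equiv.Perm.eq_inv_iff_eq.mp rfl]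

lemma a_two_zpow_cons (k : ℤ) : ∀ (x : Bool) (w : List Bool),
    (a ^ (2 * k)) (x :: w) = x :: (c ^ k) w := by
  induction k using Int.induction_on with
  | zero => intro x w; simp
  | succ k ih =>
    intro x w
    rw [mul_add, mul_one, zpow_add, Equiv.Perm.mul_apply, a_sq_cons, ih,
      zpow_add_one, Equiv.Perm.mul_apply]
  | pred k ih =>
    intro x w
    rw [mul_sub, mul_one, zpow_sub, Equiv.Perm.mul_apply, a_sq_inv_cons, ih,
      zpow_sub_one, Equiv.Perm.mul_apply]

lemma a_odd (m : ℤ) (h : Odd m) : (a ^ m) [false] = [true] := by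
  obtain ⟨k, rfl⟩ := h
  have haf : a [false] = [true] := by
    rw [show [false] = false :: ([] : List Bool) from rfl, a_false, c_nil]
  rw [zpow_add_one, Equiv.Perm.mul_apply, haf,
    show [true] = true :: ([] : List Bool) from rfl, a_two_zpow_cons, zpow_nil c c_nil]

lemma even_of_eq_one (m n : ℤ) (h : a ^ m * c ^ n = 1) : Even m := by
  rcases Int.even_or_odd m with he | ho
  · exact he
  · exfalso
    have h1 : (a ^ m * c ^ n) [false] = [false] := by rw [h]; rfl
    rw [Equiv.Perm.mul_apply, show [false] = (false :: ([] : List Bool)) from rfl,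
      c_zpow_cons, zpow_nil a a_nil, a_odd m ho] at h1
    simp at h1

lemma descent (m n : ℤ) (h : a ^ (2 * m) * c ^ n = 1) : a ^ n * c ^ m = 1 := by
  have key : ∀ w, (c ^ m) ((a ^ n) w) = w := by
    intro w
    have h1 : (a ^ (2 * m) * c ^ n) (false :: w) = false :: w := by rw [h]; rfl
    rw [Equiv.Perm.mul_apply, c_zpow_cons, a_two_zpow_cons] at h1
    exact (List.cons.injEq _ _ _ _ ▸ h1).2
  have h2 : c ^ m * a ^ n = 1 := Equiv.ext fun w => key w
  rwa [← (comm_ac.symm.zpow_zpow m n)]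

lemma descent0 (n : ℤ) (h : c ^ n = 1) : a ^ n = 1 := by
  apply Equiv.ext
  intro w
  rw [Equiv.Perm.one_apply]
  have h1 : (c ^ n) (false :: w) = false :: w := by rw [h, Equiv.Perm.one_apply]
  rw [c_zpow_cons] at h1
  exact (List.cons.injEq _ _ _ _ ▸ h1).2

lemma key_lemma : ∀ N : ℕ, ∀ m n : ℤ, m.natAbs + n.natAbs ≤ N →
    a ^ m * c ^ n = 1 → m = 0 ∧ n = 0 := by
  intro N
  induction N with
  | zero =>
    intro m n hN _
    omega
  | succ N ih =>
    intro m n hN h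
    by_cases hm : m = 0
    · subst hm
      by_cases hn : n = 0
      · exact ⟨rfl, hn⟩
      · rw [zpow_zero, one_mul] at h
        have ha : a ^ n = 1 := descent0 n h
        have hev : Even n := by
          rcases Int.even_or_odd n with he | ho
          · exact he
          · exfalso
            have := a_odd n ho
            rw [ha] at this
            simp at this
        obtain ⟨n', rfl⟩ := hev
        have hn2 : n' + n' = 2 * n' := by ring
        rw [hn2] at ha hn ⊢
        have hc : c ^ n' = 1 := by
          apply Equiv.ext
          intro w
          rw [Equiv.Perm.one_apply]
          have h1 : (a ^ (2 * n')) (false :: w) = false :: w := by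
            rw [ha, Equiv.Perm.one_apply]
          rw [a_two_zpow_cons] at h1
          exact (List.cons.injEq _ _ _ _ ▸ h1).2
        have hres := ih 0 n' (by
          have : (2 * n').natAbs = 2 * n'.natAbs := by
            simp [Int.natAbs_mul]
          omega) (by rwa [zpow_zero, one_mul])
        omega
    · have hev : Even m := even_of_eq_one m n h
      obtain ⟨m', rfl⟩ := hev
      have hm2 : m' + m' = 2 * m' := by ring
      rw [hm2] at h hm hN ⊢
      have h2 := descent m' n h
      have hres := ih n m' (by
        have : (2 * m').natAbs = 2 * m'.natAbs := by simp [Int.natAbs_mul]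
        omega) h2
      omega

noncomputable def phi771 : Multiplicative ℤ × Multiplicative ℤ →* Equiv.Perm (List Bool) :=
  (zpowersHom _ a).noncommCoprod (zpowersHom _ c)
    (fun m n => comm_ac.zpow_zpow m.toAdd n.toAdd)

lemma phi771_apply (p : Multiplicative ℤ × Multiplicative ℤ) :
    phi771 p = a ^ p.1.toAdd * c ^ p.2.toAdd := rfl

end Aux771

/-- The group generated by automaton 771 is free abelian of rank 2 with basis
`{a, c}`: `b` is the identity, `a` and `c` commute, `aᵐcⁿ = 1` only when
`m = n = 0`, and the group is isomorphic to `ℤ²`. -/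
theorem automaton771_group_is_Z2 :
    b = 1 ∧ Commute a c ∧
    Subgroup.closure {a, b, c} = Subgroup.closure {a, c} ∧
    (∀ m n : ℤ, a ^ m * c ^ n = 1 → m = 0 ∧ n = 0) ∧
    Nonempty (↥(Subgroup.closure {a, b, c}) ≃*
      (Multiplicative ℤ × Multiplicative ℤ)) := by
  have hb : b = 1 := b_eq_one
  have hcomm : Commute a c := comm_ac
  have hkey : ∀ m n : ℤ, a ^ m * c ^ n = 1 → m = 0 ∧ n = 0 := fun m n h =>
    key_lemma (m.natAbs + n.natAbs) m n le_rfl h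
  have hset : ({a, b, c} : Set (Equiv.Perm (List Bool))) = {a, (1 : Equiv.Perm (List Bool)), c} := by
    rw [hb]
  have hclosure : Subgroup.closure {a, b, c} = Subgroup.closure {a, c} := by
    apply le_antisymm
    · rw [Subgroup.closure_le]
      intro x hx
      rcases hx with rfl | rfl | rfl
      · exact Subgroup.subset_closure (Set.mem_insert _ _)
      · rw [hb]; exact (Subgroup.closure {a, c}).one_mem
      · exact Subgroup.subset_closure (Set.mem_insert_of_mem _ rfl)
    · exact Subgroup.closure_mono (by intro x hx; rcases hx with rfl | rfl
                                      · exact Set.mem_insert _ _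
                                      · exact Set.mem_insert_of_mem _ (Set.mem_insert_of_mem _ rfl))
  refine ⟨hb, hcomm, hclosure, hkey, ?_⟩
  have hinj : Function.Injective phi771 := by
    rw [injective_iff_map_eq_one]
    intro p hp
    rw [phi771_apply] at hp
    obtain ⟨h1, h2⟩ := hkey _ _ hp
    have : p = (Multiplicative.ofAdd (0:ℤ), Multiplicative.ofAdd (0:ℤ)) := by
      ext
      · exact h1
      · exact h2
    simp [this, Prod.ext_iff]
  have hrange : phi771.range = Subgroup.closure {a, c} := by
    apply le_antisymm
    · intro x hx
      rw [MonoidHom.mem_range] at hx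
      obtain ⟨p, rfl⟩ := hx
      rw [phi771_apply]
      have ha : a ∈ Subgroup.closure ({a, c} : Set (Equiv.Perm (List Bool))) :=
        Subgroup.subset_closure (Set.mem_insert _ _)
      have hc2 : c ∈ Subgroup.closure ({a, c} : Set (Equiv.Perm (List Bool))) :=
        Subgroup.subset_closure (Set.mem_insert_of_mem _ rfl)
      exact mul_mem (Subgroup.zpow_mem _ ha _) (Subgroup.zpow_mem _ hc2 _)
    · rw [Subgroup.closure_le]
      intro x hx
      rcases hx with rfl | rfl
      · exact ⟨(Multiplicative.ofAdd 1, Multiplicative.ofAdd 0), by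
          rw [phi771_apply]; simp⟩
      · exact ⟨(Multiplicative.ofAdd 0, Multiplicative.ofAdd 1), by
          rw [phi771_apply]; simp⟩
  have e1 : (↥(Subgroup.closure {a, b, c})) ≃* ↥phi771.range :=
    MulEquiv.subgroupCongr (by rw [hclosure, hrange])
  have e2 : (Multiplicative ℤ × Multiplicative ℤ) ≃* ↥phi771.range :=
    MonoidHom.ofInjective hinj
  exact ⟨e1.trans e2.symm⟩
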